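/- arXiv:2112.14079 — 5 statements merged into one kernel-verified Lean document; each statement's English description precedes it below -/
import Mathlib

section
/- Let A be finite and X ⊆ A^(ℤ×ℤ) a one-step SFT given by relations H, V. If X contains a configuration x that is horizontally periodic, i.e., x(i+m, j) = x(i,j) for all i,j with some m ≥ 1, then X contains a configuration y that is doubly periodic: there exist m' ≥ 1 and n' ≥ 1 with y(i+m', j) = y(i,j) and y(i, j+n') = y(i,j) for all i,j. -/
/-!
A horizontally `m`-periodic configuration has each row in the finite set of `m`-periodic maps
`ℤ → A`, so by pigeonhole two rows `j₁ < j₂` coincide. Repeating the horizontal strip between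
them vertically gives a doubly periodic configuration: its vertical constraints are those of
`x`, except across the seam, where row `j₂ - 1` is followed by row `j₁`, which equals row `j₂`.
-/

open Function

theorem Function.Periodic.map_emod {α : Type*} {f : ℤ → α} {m : ℤ} (hf : Periodic f m) (i : ℤ) :
    f (i % m) = f i := by
  conv_rhs => rw [← Int.emod_add_ediv_mul i m]
  exact (hf.int_mul (i / m) (i % m)).symm

theorem Int.finite_setOf_periodic (A : Type*) [Finite A] {m : ℤ} (hm : 0 < m) :
    {f : ℤ → A | Periodic f m}.Finite := by
  refine Set.Finite.of_finite_image (f := fun f (k : Set.Ico 0 m) => f k) (Set.toFinite _) ?_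
  intro f hf g hg hfg
  funext i
  rw [← hf.map_emod, ← hg.map_emod]
  exact congrFun hfg ⟨i % m, Int.emod_nonneg i hm.ne', Int.emod_lt_of_pos i hm⟩

theorem rel_add_emod_add_one {B : Type*} {R : B → B → Prop} {r : ℤ → B}
    (hR : ∀ j, R (r j) (r (j + 1))) {a p : ℤ} (hp : 0 < p) (hrep : r (a + p) = r a) (j : ℤ) :
    R (r (a + j % p)) (r (a + (j + 1) % p)) := by
  have hstep := hR (a + j % p)
  rw [add_assoc] at hstep
  rw [← Int.emod_add_emod]
  rcases (Int.add_one_le_of_lt (Int.emod_lt_of_pos j hp)).lt_or_eq with hlt | heq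
  · rwa [Int.emod_eq_of_lt (by have := Int.emod_nonneg j hp.ne'; omega) hlt]
  · rw [heq] at hstep
    rwa [heq, Int.emod_self, add_zero, ← hrep]

/-- If a one-step two-dimensional SFT `X_{(H,V)}` contains a horizontally
periodic configuration, then it contains a doubly periodic configuration. -/
theorem stmt_5 (A : Type) [Fintype A]
    (H V : A → A → Prop)
    (X : Set (ℤ × ℤ → A))
    (hX : X = {x | ∀ i j : ℤ, H (x (i, j)) (x (i + 1, j)) ∧ V (x (i, j)) (x (i, j + 1))})
    (x : ℤ × ℤ → A) (hx : x ∈ X)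
    (m : ℤ) (hm : 1 ≤ m)
    (hper : ∀ i j : ℤ, x (i + m, j) = x (i, j)) :
    ∃ y ∈ X, ∃ m' n' : ℤ, 1 ≤ m' ∧ 1 ≤ n' ∧
      (∀ i j : ℤ, y (i + m', j) = y (i, j)) ∧
      (∀ i j : ℤ, y (i, j + n') = y (i, j)) := by
  subst hX
  have hrows : ∀ j, (fun i => x (i, j)) ∈ {f : ℤ → A | Periodic f m} := fun j i => hper i j
  obtain ⟨j₁, j₂, hlt, hrow⟩ :=
    Set.Finite.exists_lt_map_eq_of_forall_mem hrows (Int.finite_setOf_periodic A (by omega))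
  set p := j₂ - j₁
  have hp : 0 < p := sub_pos.mpr hlt
  refine ⟨fun ij => x (ij.1, j₁ + ij.2 % p), fun i j => ⟨(hx i _).1, ?_⟩, m, p, hm, hp, ?_, ?_⟩
  · exact rel_add_emod_add_one (R := fun u w : ℤ → A => ∀ i, V (u i) (w i))
      (r := fun j i => x (i, j)) (fun j i => (hx i j).2) hp
      (by rw [add_sub_cancel, hrow]) j i
  · exact fun i j => hper i _
  · intro i j
    simp only [Int.add_emod_right]
end

section
/- Let A be finite and X ⊆ A^(ℤ×ℤ) a one-step SFT given by relations H, V. If X contains a configuration periodic with period vector (m,n) where m ≠ 0 and n ≠ 0, then X contains a horizontally periodic configuration (invariant under σ_{(k,0)} for some k ≥ 1) and also a vertically periodic configuration. -/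
/-!
Replacing `(m, n)` by `(-m, -n)` we may take `n > 0`. An `(m, n)`-periodic configuration is
determined by its restriction to the strip `ℤ × [0, n)`, a sequence of columns in `A^[0, n)`;
besides the relations between neighbouring columns, the only constraint is the vertical one across
the top edge, and since `x (i, n) = x (i - m, 0)` it links column `i` to column `i - m`. By
pigeonhole, some window of `2 (|m| + 1)` consecutive columns recurs at a distance `p ≥ 2 (|m| + 1)`.
Repeating `p` columns starting in the middle of that window gives a `p`-periodic strip in which
every column sees, up to distance `|m| + 1`, what it sees in `x`. Its `(m, n)`-periodic extension
is therefore admissible, with periods `(p, 0)` and `(m, n)`, hence also `(0, n p)`.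
-/

open Function

variable {A : Type*}

def Admissible (H V : A → A → Prop) (x : ℤ × ℤ → A) : Prop :=
  ∀ i j : ℤ, H (x (i, j)) (x (i + 1, j)) ∧ V (x (i, j)) (x (i, j + 1))

theorem Admissible.of_periodic_of_strip {H V : A → A → Prop} {y : ℤ × ℤ → A} {m n : ℤ}
    (hn : 0 < n) (hy : Periodic y (m, n))
    (h : ∀ i j, 0 ≤ j → j < n → H (y (i, j)) (y (i + 1, j)) ∧ V (y (i, j)) (y (i, j + 1))) :
    Admissible H V y := by
  intro i j
  set q := j / n
  have shift : ∀ a b, y (a, b) = y (a - q * m, b - q * n) := fun a b => by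
    simpa using hy.zsmul q (a - q * m, b - q * n)
  have hr : j - q * n = j % n := by rw [Int.emod_def]; ring
  rw [shift i j, shift (i + 1) j, shift i (j + 1), show i + 1 - q * m = i - q * m + 1 by ring,
    show j + 1 - q * n = j - q * n + 1 by ring, hr]
  exact h _ _ (Int.emod_nonneg j hn.ne') (Int.emod_lt_of_pos j hn)

/-- The `(m, n)`-periodic configuration that equals `x (g i, r)` on the strip `ℤ × [0, n)`. -/
def stripExtension (x : ℤ × ℤ → A) (g : ℤ → ℤ) (m n : ℤ) : ℤ × ℤ → A :=
  fun v => x (g (v.1 - m * (v.2 / n)), v.2 % n)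

namespace stripExtension

variable (x : ℤ × ℤ → A) (g : ℤ → ℤ) (m : ℤ)

theorem apply_of_mem_Ico {n : ℤ} (i : ℤ) {r : ℤ} (hr : r ∈ Set.Ico 0 n) :
    stripExtension x g m n (i, r) = x (g i, r) := by
  simp [stripExtension, Int.ediv_eq_zero_of_lt hr.1 hr.2, Int.emod_eq_of_lt hr.1 hr.2]

theorem periodic {n : ℤ} (hn : n ≠ 0) : Periodic (stripExtension x g m n) (m, n) := by
  rintro ⟨i, j⟩
  have hdiv : (j + n) / n = j / n + 1 := by simpa using Int.add_mul_ediv_right j 1 hn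
  simp only [stripExtension, Prod.mk_add_mk, hdiv, Int.add_emod_right]
  ring_nf

theorem periodic_horizontal (n : ℤ) {p : ℤ} (hg : Periodic g p) :
    Periodic (stripExtension x g m n) (p, 0) := by
  rintro ⟨i, j⟩
  simp only [stripExtension, Prod.mk_add_mk, add_zero, add_sub_right_comm, hg _]

/-- Across the top edge of the strip, `y (i, n) = y (i - m, 0)` is read off `x` at `g (i - m)`,
which `hwrap` moves to `g i - m`, where periodicity of `x` turns it into `x (g i, n)`. -/
theorem admissible {H V : A → A → Prop} (hx : Admissible H V x) {n : ℤ} (hn : 0 < n)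
    (hper : Periodic x (m, n))
    (hstep : ∀ a, ∀ r ∈ Set.Ico 0 n, x (g (a + 1), r) = x (g a + 1, r))
    (hwrap : ∀ a, x (g (a - m), 0) = x (g a - m, 0)) :
    Admissible H V (stripExtension x g m n) := by
  refine Admissible.of_periodic_of_strip hn (periodic x g m hn.ne') fun i r hr0 hrn => ?_
  have hr : r ∈ Set.Ico 0 n := ⟨hr0, hrn⟩
  rw [apply_of_mem_Ico x g m i hr]
  constructor
  · rw [apply_of_mem_Ico x g m _ hr, hstep i r hr]
    exact (hx _ _).1
  rcases (show r + 1 < n ∨ r + 1 = n by omega) with hlt | heq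
  · rw [apply_of_mem_Ico x g m i ⟨by omega, hlt⟩]
    exact (hx _ _).2
  have hy : stripExtension x g m n (i, r + 1) = x (g i, r + 1) := calc
    _ = stripExtension x g m n (i - m, 0) := by simpa [heq] using periodic x g m hn.ne' (i - m, 0)
    _ = x (g (i - m), 0) := apply_of_mem_Ico x g m _ ⟨le_rfl, hn⟩
    _ = x (g i - m, 0) := hwrap i
    _ = x (g i, r + 1) := by simpa [heq] using (hper (g i - m, 0)).symm
  rw [hy]
  exact (hx _ _).2

end stripExtension

theorem exists_map_add_eq_on_Ico {β : Type*} [Finite β] (f : ℤ → β) {L : ℤ} (hL : 0 < L) :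
    ∃ s p : ℤ, L ≤ p ∧ ∀ a ∈ Set.Ico s (s + L), f (a + p) = f a := by
  obtain ⟨k₁, k₂, hne, hk⟩ := Finite.exists_ne_map_eq_of_infinite
    fun k : ℤ => fun d : Set.Ico 0 L => f (k * L + d)
  wlog hlt : k₁ < k₂ generalizing k₁ k₂
  · exact this k₂ k₁ hne.symm hk.symm (hne.lt_or_gt.resolve_left hlt)
  refine ⟨k₁ * L, (k₂ - k₁) * L, le_mul_of_one_le_left hL.le (by omega), fun a ha => ?_⟩
  have hd : a - k₁ * L ∈ Set.Ico 0 L := by simp only [Set.mem_Ico] at ha ⊢; omega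
  have := congrFun hk ⟨_, hd⟩
  simp only at this
  rw [show a + (k₂ - k₁) * L = k₂ * L + (a - k₁ * L) by ring, ← this]
  ring_nf

theorem map_toIcoMod_add {γ : Type*} (f : ℤ → γ) {s p M : ℤ} (hp : 0 < p) (hMp : M ≤ p)
    (h : ∀ a ∈ Set.Ico (s - M) (s + M), f (a + p) = f a) (a e : ℤ) (he : |e| ≤ M) :
    f (toIcoMod hp s (a + e)) = f (toIcoMod hp s a + e) := by
  set c := toIcoMod hp s a
  have hc : c ∈ Set.Ico s (s + p) := toIcoMod_mem_Ico hp s a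
  have hmod : toIcoMod hp s (a + e) = toIcoMod hp s (c + e) := by
    rw [toIcoMod_eq_toIcoMod]
    exact ⟨_, by rw [add_sub_add_right_eq_sub]; exact toIcoMod_sub_self hp s a⟩
  rw [Set.mem_Ico] at hc
  rw [abs_le] at he
  rw [hmod]
  rcases lt_or_ge (c + e) s with hlt | hge
  · rw [← toIcoMod_add_right, (toIcoMod_eq_self hp).2 (by constructor <;> omega)]
    exact h _ ⟨by omega, by omega⟩
  rcases lt_or_ge (c + e) (s + p) with hlt' | hge'
  · rw [(toIcoMod_eq_self hp).2 ⟨hge, hlt'⟩]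
  · rw [← toIcoMod_sub, (toIcoMod_eq_self hp).2 (by constructor <;> omega)]
    simpa using (h (c + e - p) ⟨by omega, by omega⟩).symm

theorem Admissible.exists_doubly_periodic_of_pos [Finite A] {H V : A → A → Prop}
    {x : ℤ × ℤ → A} (hx : Admissible H V x) {m n : ℤ} (hn : 0 < n) (hper : Periodic x (m, n)) :
    ∃ y, Admissible H V y ∧ ∃ k, 0 < k ∧ Periodic y (k, 0) ∧ Periodic y (0, k) := by
  set M := |m| + 1
  have hM : 0 < M := by positivity
  obtain ⟨s, p, hMp, hwin⟩ :=
    exists_map_add_eq_on_Ico (fun a (r : Set.Ico 0 n) => x (a, r)) (L := 2 * M) (by omega)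
  have hp : 0 < p := by omega
  set g := toIcoMod hp (s + M)
  have hloc : ∀ a e, |e| ≤ M → ∀ r ∈ Set.Ico 0 n, x (g (a + e), r) = x (g a + e, r) :=
    fun a e he r hr => map_toIcoMod_add (fun a => x (a, r)) hp (by omega)
      (fun b hb => congrFun (hwin b (by simp only [Set.mem_Ico] at hb ⊢; omega)) ⟨r, hr⟩) a e he
  have hy : Periodic (stripExtension x g m n) (m, n) := stripExtension.periodic x g m hn.ne'
  have hyp : Periodic (stripExtension x g m n) (p, 0) :=
    stripExtension.periodic_horizontal x g m n fun a => toIcoMod_add_right hp _ a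
  refine ⟨stripExtension x g m n, stripExtension.admissible x g m hx hn hper
    (fun a => hloc a 1 (by simp [M])) (fun a => ?_), n * p, by positivity, ?_, ?_⟩
  · simpa [sub_eq_add_neg] using hloc a (-m) (by simp [M]) 0 ⟨le_rfl, hn⟩
  · simpa using hyp.zsmul n
  · have hperiod : p • ((m, n) : ℤ × ℤ) - m • (p, 0) = (0, n * p) := by
      ext <;> simp [mul_comm]
    rw [← hperiod]
    exact (hy.zsmul p).sub_period (hyp.zsmul m)

theorem Admissible.exists_doubly_periodic [Finite A] {H V : A → A → Prop} {x : ℤ × ℤ → A}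
    (hx : Admissible H V x) {m n : ℤ} (hn : n ≠ 0) (hper : Periodic x (m, n)) :
    ∃ y, Admissible H V y ∧ ∃ k, 0 < k ∧ Periodic y (k, 0) ∧ Periodic y (0, k) := by
  rcases hn.lt_or_gt with hneg | hpos
  · exact hx.exists_doubly_periodic_of_pos (neg_pos.2 hneg) (by simpa using hper.neg)
  · exact hx.exists_doubly_periodic_of_pos hpos hper

theorem stmt_6_general (A : Type) [Fintype A]
    (H V : A → A → Prop)
    (X : Set (ℤ × ℤ → A))
    (hX : X = {x | ∀ i j : ℤ, H (x (i, j)) (x (i + 1, j)) ∧ V (x (i, j)) (x (i, j + 1))})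
    (x : ℤ × ℤ → A) (hx : x ∈ X)
    (m n : ℤ) (hn : n ≠ 0)
    (hper : ∀ v : ℤ × ℤ, x (v + (m, n)) = x v) :
    (∃ y ∈ X, ∃ k : ℤ, 1 ≤ k ∧ ∀ i j : ℤ, y (i + k, j) = y (i, j)) ∧
    (∃ z ∈ X, ∃ k : ℤ, 1 ≤ k ∧ ∀ i j : ℤ, z (i, j + k) = z (i, j)) := by
  subst hX
  obtain ⟨y, hy, k, hk, hyk, hyk'⟩ := Admissible.exists_doubly_periodic hx hn hper
  exact ⟨⟨y, hy, k, hk, fun i j => by simpa using hyk (i, j)⟩,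
    ⟨y, hy, k, hk, fun i j => by simpa using hyk' (i, j)⟩⟩

/-- If a one-step two-dimensional SFT `X_{(H,V)}` contains a configuration with
period vector `(m, n)`, `m ≠ 0 ≠ n`, then it contains a horizontally periodic
configuration and a vertically periodic configuration. -/
theorem stmt_6 (A : Type) [Fintype A]
    (H V : A → A → Prop)
    (X : Set (ℤ × ℤ → A))
    (hX : X = {x | ∀ i j : ℤ, H (x (i, j)) (x (i + 1, j)) ∧ V (x (i, j)) (x (i, j + 1))})
    (x : ℤ × ℤ → A) (hx : x ∈ X)
    (m n : ℤ) (hm : m ≠ 0) (hn : n ≠ 0)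
    (hper : ∀ v : ℤ × ℤ, x (v + (m, n)) = x v) :
    (∃ y ∈ X, ∃ k : ℤ, 1 ≤ k ∧ ∀ i j : ℤ, y (i + k, j) = y (i, j)) ∧
    (∃ z ∈ X, ∃ k : ℤ, 1 ≤ k ∧ ∀ i j : ℤ, z (i, j + k) = z (i, j)) :=
  stmt_6_general A H V X hX x hx m n hn hper
end

section
/- Let A be finite and H, V relations on A with corresponding 0-1 matrices. Suppose every row and column of H and V is nonzero (every symbol has H- and V-predecessors and successors), and suppose that for all a, b ∈ A: (∃ c, H a c ∧ V c b) ↔ (∃ d, V a d ∧ H d b). Then the two-dimensional SFT X_{(H,V)} is nonempty. -/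
/-!
Cut a configuration along its diagonals `j - i = k`. Two consecutive diagonals form a bi-infinite
staircase alternating `V`- and `H`-steps, and the corner condition ensures that every such
staircase pair can be continued by one more diagonal on either side: each `V`-then-`H` step of one
diagonal is turned into an `H`-then-`V` step through its neighbour, and conversely. A first pair
comes from a bi-infinite `V∘H`-path, which exists since every symbol has successors and
predecessors; then one extends diagonal by diagonal in both directions.
-/

namespace Relation

theorem exists_int_chain {T : Type*} [Nonempty T] (R : T → T → Prop)
    (hsucc : ∀ t, ∃ t', R t t') (hpred : ∀ t, ∃ t', R t' t) :
    ∃ q : ℤ → T, ∀ k, R (q k) (q (k + 1)) := by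
  choose u hu using hsucc
  choose d hd using hpred
  let t₀ : T := Classical.arbitrary T
  refine ⟨fun k => Int.rec (fun n => u^[n] t₀) (fun n => d^[n + 1] t₀) k, ?_⟩
  rintro (n | _ | n)
  · show R (u^[n] t₀) (u^[n + 1] t₀)
    exact (Function.iterate_succ_apply' u n t₀).symm ▸ hu _
  · exact hd t₀
  · show R (d^[n + 2] t₀) (d^[n + 1] t₀)
    exact (Function.iterate_succ_apply' d (n + 1) t₀).symm ▸ hd _

/-- Applies `exists_int_chain` to the type of `R`-edges, linked head to tail. -/
theorem exists_int_chain_of_rel {T : Type*} (R : T → T → Prop) {t₀ t₁ : T} (h₀₁ : R t₀ t₁)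
    (hsucc : ∀ t t', R t t' → ∃ t'', R t' t'') (hpred : ∀ t t', R t t' → ∃ t'', R t'' t) :
    ∃ q : ℤ → T, ∀ k, R (q k) (q (k + 1)) := by
  have : Nonempty {e : T × T // R e.1 e.2} := ⟨⟨(t₀, t₁), h₀₁⟩⟩
  obtain ⟨q, hq⟩ := exists_int_chain (fun e e' : {e : T × T // R e.1 e.2} => e.1.2 = e'.1.1)
    (fun ⟨(t, t'), h⟩ => let ⟨t'', h'⟩ := hsucc t t' h; ⟨⟨(t', t''), h'⟩, rfl⟩)
    (fun ⟨(t', t''), h⟩ => let ⟨t, h'⟩ := hpred t' t'' h; ⟨⟨(t, t'), h'⟩, rfl⟩)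
  exact ⟨fun k => (q k).1.1, fun k => (congrArg (R (q k).1.1) (hq k)).mp (q k).2⟩

end Relation

namespace SFT

variable {A : Type*} (H V : A → A → Prop)

def IsAdmissible (x : ℤ × ℤ → A) : Prop :=
  ∀ i j : ℤ, H (x (i, j)) (x (i + 1, j)) ∧ V (x (i, j)) (x (i, j + 1))

/-- `f i = x (i, i + k)` and `g i = x (i, i + k + 1)` for the diagonals `k`, `k + 1` of a
configuration `x`. -/
def AdjacentDiagonals (f g : ℤ → A) : Prop :=
  ∀ i, V (f i) (g i) ∧ H (g i) (f (i + 1))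

variable {H V}

theorem exists_adjacentDiagonals [Nonempty A]
    (hHsucc : ∀ a, ∃ b, H a b) (hHpred : ∀ a, ∃ b, H b a)
    (hVsucc : ∀ a, ∃ b, V a b) (hVpred : ∀ a, ∃ b, V b a) :
    ∃ f g, AdjacentDiagonals H V f g := by
  obtain ⟨f, hf⟩ := Relation.exists_int_chain (Relation.Comp V H)
    (fun a => let ⟨b, hab⟩ := hVsucc a; let ⟨c, hbc⟩ := hHsucc b; ⟨c, b, hab, hbc⟩)
    (fun c => let ⟨b, hbc⟩ := hHpred c; let ⟨a, hab⟩ := hVpred b; ⟨a, b, hab, hbc⟩)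
  choose g hg using hf
  exact ⟨f, g, hg⟩

theorem AdjacentDiagonals.exists_next (hHV : Relation.Comp H V ≤ Relation.Comp V H)
    {f g : ℤ → A} (hfg : AdjacentDiagonals H V f g) : ∃ h, AdjacentDiagonals H V g h :=
  ⟨_, fun i => (hHV _ _ ⟨f (i + 1), (hfg i).2, (hfg (i + 1)).1⟩).choose_spec⟩

theorem AdjacentDiagonals.exists_prev (hVH : Relation.Comp V H ≤ Relation.Comp H V)
    {f g : ℤ → A} (hfg : AdjacentDiagonals H V f g) : ∃ e, AdjacentDiagonals H V e f := by
  choose c hc using fun i => hVH _ _ ⟨g i, hfg i⟩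
  refine ⟨fun i => c (i - 1), fun i => ⟨?_, ?_⟩⟩
  · simpa using (hc (i - 1)).2
  · simpa using (hc i).1

theorem isAdmissible_of_adjacentDiagonals {F : ℤ → ℤ → A}
    (hF : ∀ k, AdjacentDiagonals H V (F k) (F (k + 1))) :
    IsAdmissible H V fun p => F (p.2 - p.1) p.1 := by
  refine fun i j => ⟨?_, ?_⟩
  · simpa [sub_add_eq_sub_sub] using (hF (j - (i + 1)) i).2
  · simpa [sub_add_eq_add_sub] using (hF (j - i) i).1

end SFT

theorem stmt_10_general (A : Type) [Nonempty A]
    (H V : A → A → Prop)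
    (hHsucc : ∀ a : A, ∃ b, H a b) (hHpred : ∀ a : A, ∃ b, H b a)
    (hVsucc : ∀ a : A, ∃ b, V a b) (hVpred : ∀ a : A, ∃ b, V b a)
    (hcorner : ∀ a b : A, (∃ c, H a c ∧ V c b) ↔ (∃ d, V a d ∧ H d b))
    (X : Set (ℤ × ℤ → A))
    (hX : X = {x | ∀ i j : ℤ,
        H (x (i, j)) (x (i + 1, j)) ∧ V (x (i, j)) (x (i, j + 1))}) :
    X.Nonempty := by
  obtain ⟨f, g, hfg⟩ := SFT.exists_adjacentDiagonals hHsucc hHpred hVsucc hVpred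
  obtain ⟨F, hF⟩ := Relation.exists_int_chain_of_rel (SFT.AdjacentDiagonals H V) hfg
    (fun _ _ h => h.exists_next fun a b => (hcorner a b).1)
    (fun _ _ h => h.exists_prev fun a b => (hcorner a b).2)
  exact hX ▸ ⟨fun p => F (p.2 - p.1) p.1, SFT.isAdmissible_of_adjacentDiagonals hF⟩

/-- If every symbol has `H`- and `V`-successors and predecessors, and
`(HV)_{ab} ≠ 0 ↔ (VH)_{ab} ≠ 0` for all `a, b` (every L-shaped corner of one
orientation can be completed to a 2×2 square), then the SFT `X_{(H,V)}` is
nonempty. -/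
theorem stmt_10 (A : Type) [Fintype A] [Nonempty A]
    (H V : A → A → Prop)
    (hHsucc : ∀ a : A, ∃ b, H a b) (hHpred : ∀ a : A, ∃ b, H b a)
    (hVsucc : ∀ a : A, ∃ b, V a b) (hVpred : ∀ a : A, ∃ b, V b a)
    (hcorner : ∀ a b : A, (∃ c, H a c ∧ V c b) ↔ (∃ d, V a d ∧ H d b))
    (X : Set (ℤ × ℤ → A))
    (hX : X = {x | ∀ i j : ℤ,
        H (x (i, j)) (x (i + 1, j)) ∧ V (x (i, j)) (x (i, j + 1))}) :
    X.Nonempty :=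
  stmt_10_general A H V hHsucc hHpred hVsucc hVpred hcorner X hX
end

section
/- Let A be finite, and H, V relations on A with all rows and columns nonzero. If for all a,b ∈ A, (∃ c, H a c ∧ V c b) ↔ (∃ d, V a d ∧ H d b), then X_{(H,V)} contains periodic points of arbitrarily large periods: for every m ∈ ℕ there exists x ∈ X_{(H,V)} and a nonzero period vector u of x with ‖u‖ ≥ m. -/
/-!
Choose a cycle `e` of length `n` for the diagonal relation `HV`, which exists because `A` is
finite and every symbol has an `HV`-successor. Read `e` as the content of a diagonal
`i - j = const` of a configuration, periodic of period `n` along the diagonal. Such a diagonal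
can always be followed by a next one compatible with the local rules, and since `VH ⊆ HV`
the new diagonal is again an `HV`-cycle. There are finitely many such diagonals, so this
process eventually cycles, and the resulting configuration is invariant under `(n, n)`, hence
under every `(nk, nk)`.
-/

open Function Relation

theorem exists_isPeriodicPt_of_finite {B : Type*} [Finite B] [Nonempty B] (f : B → B) :
    ∃ L, 0 < L ∧ ∃ a, IsPeriodicPt f L a := by
  obtain ⟨i, j, hij, hfij⟩ :=
    Finite.exists_ne_map_eq_of_infinite fun k => f^[k] (Classical.arbitrary B)
  wlog hlt : i < j generalizing i j
  · exact this j i hij.symm hfij.symm (hij.lt_or_gt.resolve_left hlt)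
  refine ⟨j - i, Nat.sub_pos_of_lt hlt, f^[i] (Classical.arbitrary B), ?_⟩
  rw [IsPeriodicPt, IsFixedPt, ← iterate_add_apply, Nat.sub_add_cancel hlt.le, hfij]

theorem exists_zmod_cycle_of_forall_exists_rel {B : Type*} [Finite B] [Nonempty B]
    (R : B → B → Prop) (h : ∀ b, ∃ c, R b c) :
    ∃ L, 0 < L ∧ ∃ s : ZMod L → B, ∀ z, R (s z) (s (z + 1)) := by
  choose f hf using h
  obtain ⟨L, hL, a, ha⟩ := exists_isPeriodicPt_of_finite f
  have : NeZero L := ⟨hL.ne'⟩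
  refine ⟨L, hL, fun z => f^[z.val] a, fun z => ?_⟩
  change R (f^[z.val] a) (f^[(z + 1).val] a)
  rw [ZMod.val_add, ZMod.val_one_eq_one_mod, Nat.add_mod_mod, ha.iterate_mod_apply,
    iterate_succ_apply']
  exact hf _

section DiagonalTiling

variable {A : Type*} (H V : A → A → Prop) {n : ℕ}

/-- `f` and `g` can be the diagonals `i - j = k` and `i - j = k + 1` of a configuration,
a diagonal listing its cells `(i, j)` by `i mod n`. -/
def DiagStep (f g : ZMod n → A) : Prop :=
  ∀ z, H (f z) (g (z + 1)) ∧ V (g z) (f z)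

variable {H V}

theorem exists_diagStep {f : ZMod n → A} (hf : ∀ z, Comp H V (f z) (f (z + 1))) :
    ∃ g, DiagStep H V f g := by
  choose c hHc hcV using hf
  exact ⟨fun z => c (z - 1), fun z => ⟨by simpa using hHc z, by simpa using hcV (z - 1)⟩⟩

theorem DiagStep.comp {f g : ZMod n → A} (h : DiagStep H V f g) (z : ZMod n) :
    Comp V H (g z) (g (z + 1)) :=
  ⟨f z, (h z).2, (h z).1⟩

theorem exists_diagStep_chain [Finite A] [NeZero n]
    (hcomm : ∀ a b, Comp V H a b → Comp H V a b)
    {e : ZMod n → A} (he : ∀ z, Comp H V (e z) (e (z + 1))) :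
    ∃ L, ∃ s : ZMod L → ZMod n → A, ∀ k, DiagStep H V (s k) (s (k + 1)) := by
  let B := {f : ZMod n → A // ∀ z, Comp H V (f z) (f (z + 1))}
  have : Nonempty B := ⟨⟨e, he⟩⟩
  have hstep : ∀ f : B, ∃ g : B, DiagStep H V f.1 g.1 := fun f => by
    obtain ⟨g, hg⟩ := exists_diagStep f.2
    exact ⟨⟨g, fun z => hcomm _ _ (hg.comp z)⟩, hg⟩
  obtain ⟨L, -, s, hs⟩ := exists_zmod_cycle_of_forall_exists_rel _ hstep
  exact ⟨L, fun k => (s k).1, hs⟩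

def diagTiling {L : ℕ} (s : ZMod L → ZMod n → A) (p : ℤ × ℤ) : A :=
  s ((p.1 - p.2 : ℤ) : ZMod L) (p.1 : ZMod n)

variable {L : ℕ} {s : ZMod L → ZMod n → A}

theorem diagTiling_rel (hs : ∀ k, DiagStep H V (s k) (s (k + 1))) (i j : ℤ) :
    H (diagTiling s (i, j)) (diagTiling s (i + 1, j)) ∧
      V (diagTiling s (i, j)) (diagTiling s (i, j + 1)) := by
  constructor
  · simpa [diagTiling, add_sub_right_comm] using (hs ((i - j : ℤ) : ZMod L) (i : ZMod n)).1
  · simpa [diagTiling, sub_add_eq_sub_sub] using (hs ((i - j - 1 : ℤ) : ZMod L) (i : ZMod n)).2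

theorem diagTiling_add_diag (k : ℤ) (p : ℤ × ℤ) :
    diagTiling s (p + (n * k, n * k)) = diagTiling s p := by
  simp [diagTiling]

end DiagonalTiling

theorem stmt_12_general (A : Type) [Fintype A] [Nonempty A]
    (H V : A → A → Prop)
    (hHsucc : ∀ a : A, ∃ b, H a b)
    (hVsucc : ∀ a : A, ∃ b, V a b)
    (hcorner : ∀ a b : A, (∃ c, H a c ∧ V c b) ↔ (∃ d, V a d ∧ H d b))
    (X : Set (ℤ × ℤ → A))
    (hX : X = {x | ∀ i j : ℤ,
        H (x (i, j)) (x (i + 1, j)) ∧ V (x (i, j)) (x (i, j + 1))}) :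
    ∀ m : ℕ, ∃ x ∈ X, ∃ u : ℤ × ℤ, u ≠ 0 ∧
      (∀ p : ℤ × ℤ, x (p + u) = x p) ∧ m ≤ u.1.natAbs + u.2.natAbs := by
  intro m
  have hHV : ∀ a, ∃ b, Comp H V a b := fun a =>
    let ⟨c, hc⟩ := hHsucc a
    let ⟨b, hb⟩ := hVsucc c
    ⟨b, c, hc, hb⟩
  obtain ⟨n, hn, e, he⟩ := exists_zmod_cycle_of_forall_exists_rel _ hHV
  have : NeZero n := ⟨hn.ne'⟩
  obtain ⟨L, s, hs⟩ := exists_diagStep_chain (fun a b => (hcorner a b).2) he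
  refine ⟨diagTiling s, hX ▸ diagTiling_rel hs, (n * (m + 1), n * (m + 1)), ?_,
    diagTiling_add_diag _, ?_⟩
  · exact ne_of_apply_ne Prod.fst (by positivity)
  · have : (n * (m + 1) : ℤ).natAbs = n * (m + 1) := by norm_cast
    rw [this]
    nlinarith

/-- Under the matrix condition `(HV)_{ab} ≠ 0 ↔ (VH)_{ab} ≠ 0` (with all rows
and columns of `H` and `V` nonzero), the SFT `X_{(H,V)}` possesses periodic
points of arbitrarily large periods. -/
theorem stmt_12 (A : Type) [Fintype A] [Nonempty A]
    (H V : A → A → Prop)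
    (hHsucc : ∀ a : A, ∃ b, H a b) (hHpred : ∀ a : A, ∃ b, H b a)
    (hVsucc : ∀ a : A, ∃ b, V a b) (hVpred : ∀ a : A, ∃ b, V b a)
    (hcorner : ∀ a b : A, (∃ c, H a c ∧ V c b) ↔ (∃ d, V a d ∧ H d b))
    (X : Set (ℤ × ℤ → A))
    (hX : X = {x | ∀ i j : ℤ,
        H (x (i, j)) (x (i + 1, j)) ∧ V (x (i, j)) (x (i, j + 1))}) :
    ∀ m : ℕ, ∃ x ∈ X, ∃ u : ℤ × ℤ, u ≠ 0 ∧
      (∀ p : ℤ × ℤ, x (p + u) = x p) ∧ m ≤ u.1.natAbs + u.2.natAbs :=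
  stmt_12_general A H V hHsucc hVsucc hcorner X hX
end

section
/- Let A be finite with relations H, V on A, and suppose each element of A has at least one H-successor, H-predecessor, V-successor and V-predecessor. If for all a, b ∈ A, (∃ c, H a c ∧ V c b) → (∃ d, V a d ∧ H d b), then for every r, s ≥ 1, every allowed 1×r horizontal strip (word w of length r with H (w_i) (w_{i+1})) extends to an allowed s×r rectangle, i.e., a pattern p : [0, r−1]×[0, s−1] → A with bottom row w satisfying all H and V adjacencies. -/
/-!
A row can always be extended by one row above it, building the new row from right to left: the
rightmost cell gets any `V`-successor, and once the cell above `b` is `b'`, the corner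
`H a b`, `V b b'` is completed by `hcorner` to a cell `d` with `V a d` and `H d b'`.
Iterating this row step gives arbitrarily tall rectangles.
-/

open List

section Extension

variable {A : Type*} {H V : A → A → Prop}

theorem List.IsChain.exists_forall₂_isChain (hVsucc : ∀ a, ∃ b, V a b)
    (hcorner : ∀ a b, (∃ c, H a c ∧ V c b) → ∃ d, V a d ∧ H d b) :
    ∀ {l : List A}, l.IsChain H → ∃ l', Forall₂ V l l' ∧ l'.IsChain H
  | [], _ => ⟨[], .nil, .nil⟩
  | [a], _ =>
    let ⟨b, hab⟩ := hVsucc a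
    ⟨[b], .cons hab .nil, .singleton b⟩
  | a :: b :: l, hl => by
    rw [isChain_cons_cons] at hl
    obtain ⟨_ | ⟨b', l'⟩, hV, hl'⟩ := hl.2.exists_forall₂_isChain hVsucc hcorner
    · cases hV
    obtain ⟨d, had, hdb'⟩ := hcorner a b' ⟨b, hl.1, (forall₂_cons.1 hV).1⟩
    exact ⟨d :: b' :: l', .cons had hV, isChain_cons_cons.2 ⟨hdb', hl'⟩⟩

theorem exists_isChain_ofFn_above (hVsucc : ∀ a, ∃ b, V a b)
    (hcorner : ∀ a b, (∃ c, H a c ∧ V c b) → ∃ d, V a d ∧ H d b)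
    {n : ℕ} {w : Fin n → A} (hw : (ofFn w).IsChain H) :
    ∃ w' : Fin n → A, (ofFn w').IsChain H ∧ ∀ i, V (w i) (w' i) := by
  obtain ⟨l', hV, hl'⟩ := hw.exists_forall₂_isChain hVsucc hcorner
  obtain rfl : l'.length = n := by simpa using hV.length_eq.symm
  refine ⟨l'.get, by rwa [ofFn_get], fun i => ?_⟩
  simpa using forall₂_iff_get.1 hV |>.2 i (by simp) i.2

theorem exists_rows_above (hVsucc : ∀ a, ∃ b, V a b)
    (hcorner : ∀ a b, (∃ c, H a c ∧ V c b) → ∃ d, V a d ∧ H d b)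
    {n : ℕ} {w : Fin n → A} (hw : (ofFn w).IsChain H) :
    ∃ rows : ℕ → Fin n → A, rows 0 = w ∧ (∀ j, (ofFn (rows j)).IsChain H) ∧
      ∀ j i, V (rows j i) (rows (j + 1) i) := by
  choose next hnextH hnextV using
    fun u : {u : Fin n → A // (ofFn u).IsChain H} => exists_isChain_ofFn_above hVsucc hcorner u.2
  let step (u : {u : Fin n → A // (ofFn u).IsChain H}) : {u : Fin n → A // (ofFn u).IsChain H} :=
    ⟨next u, hnextH u⟩
  refine ⟨fun j => (step^[j] ⟨w, hw⟩).1, rfl, fun j => (step^[j] _).2, fun j i => ?_⟩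
  simp only [Function.iterate_succ_apply']
  exact hnextV _ i

end Extension

/-- If every symbol has `H`- and `V`-successors and predecessors and
`(HV)_{ab} ≠ 0 → (VH)_{ab} ≠ 0`, then every allowed horizontal strip of length
`r` extends to an allowed `s × r` rectangle with the given strip as bottom
row, for every `s ≥ 1`. -/
theorem stmt_18 (A : Type)
    (H V : A → A → Prop)
    (hVsucc : ∀ a : A, ∃ b, V a b)
    (hcorner : ∀ a b : A, (∃ c, H a c ∧ V c b) → (∃ d, V a d ∧ H d b)) :
    ∀ (r s : ℕ), ∀ _hr : 1 ≤ r, ∀ hs : 1 ≤ s,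
      ∀ w : Fin r → A,
        (∀ (i : ℕ) (hi : i + 1 < r), H (w ⟨i, by omega⟩) (w ⟨i + 1, hi⟩)) →
        ∃ p : Fin r → Fin s → A,
          (∀ i : Fin r, p i ⟨0, by omega⟩ = w i) ∧
          (∀ (i : ℕ) (hi : i + 1 < r) (j : Fin s),
            H (p ⟨i, by omega⟩ j) (p ⟨i + 1, hi⟩ j)) ∧
          (∀ (i : Fin r) (j : ℕ) (hj : j + 1 < s),
            V (p i ⟨j, by omega⟩) (p i ⟨j + 1, hj⟩)) := by
  intro r s _ _ w hw
  obtain ⟨rows, hbottom, hH, hV⟩ := exists_rows_above hVsucc hcorner (isChain_ofFn.2 hw)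
  exact ⟨fun i j => rows j i, fun i => congrFun hbottom i,
    fun i hi j => isChain_ofFn.1 (hH j) i hi, fun i j _ => hV j i⟩
end
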